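/- Strong Equivalence Characterisation: For any two AC-programs Π₁ and Π₂ (over a common semiring signature), Π₁ and Π₂ are strongly equivalent — i.e., for every AC-program Π', the equilibrium models of Π₁ ∪ Π' and Π₂ ∪ Π' coincide — if and only if Π₁ and Π₂ have the same HT-models, i.e., the same satisfying pointed HT-interpretations. -/

import Mathlib

/-- The two worlds of HT logic. -/
inductive W : Type | H | T
deriving DecidableEq

/-- `W.le w w'` means `w' ≥ w` in the HT order (with `T ≥ H`). -/
def W.le : W → W → Prop
  | .H, _ => True
  | .T, w' => w' = .T

/-- An HT-interpretation: a pair of sets of (variable-free) atoms with `h ⊆ t`. -/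
structure HTI (A : Type*) where
  h : Set A
  t : Set A
  sub : h ⊆ t

/-- The component of a pointed HT-interpretation at world `w`. -/
def HTI.at {A : Type*} (I : HTI A) : W → Set A
  | .H => I.h
  | .T => I.t

/-- Variable-free atoms: a predicate applied to a list of domain elements (the
    domain being the carrier of the semiring `R`). -/
abbrev GAtom (P R : Type) : Type := P × List R

/-- Quantifier-free σ-formulas occurring inside weighted formulas of an `AC`-rule
    with `g` global and `l` local variables; atom arguments are global variables,
    local variables, or constants. -/
inductive BF (P R : Type) (g l : ℕ) : Type
  | bot
  | atom (p : P) (args : List (Fin g ⊕ Fin l ⊕ R))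
  | impl (φ ψ : BF P R g l)
  | or (φ ψ : BF P R g l)
  | and (φ ψ : BF P R g l)

/-- The value of an atom argument under assignments `γ`, `lam` to the global and
    local variables. -/
def argVal {R : Type} {g l : ℕ} (γ : Fin g → R) (lam : Fin l → R) :
    Fin g ⊕ Fin l ⊕ R → R :=
  Sum.elim γ (Sum.elim lam id)

/-- HT satisfaction of σ-formulas under assignments `γ`, `lam`. -/
def BF.sat {P R : Type} {g l : ℕ} (I : HTI (GAtom P R)) (γ : Fin g → R)
    (lam : Fin l → R) : W → BF P R g l → Prop
  | _, .bot => False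
  | w, .atom p args => (p, args.map (argVal γ lam)) ∈ I.at w
  | w, .impl φ ψ => ∀ w', W.le w w' → (BF.sat I γ lam w' φ → BF.sat I γ lam w' ψ)
  | w, .or φ ψ => BF.sat I γ lam w φ ∨ BF.sat I γ lam w ψ
  | w, .and φ ψ => BF.sat I γ lam w φ ∧ BF.sat I γ lam w ψ

/-- Quantifier-free weighted σ-formulas over the semiring `R`, with `g` global
    and `l` local variables. -/
inductive WT (P R : Type) (g l : ℕ) : Type
  | const (k : R)
  | gvar (x : Fin g)
  | lvar (y : Fin l)
  | form (φ : BF P R g l)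
  | wimpl (α β : WT P R g l)
  | add (α β : WT P R g l)
  | mul (α β : WT P R g l)
  | neg (α : WT P R g l)
  | inv (α : WT P R g l)

open Classical in
/-- Value of a weighted σ-formula (`nO`, `iO` interpret `−`, `⁻¹`;
    `e_⊗ = 1`, `e_⊕ = 0`). -/
noncomputable def WT.val {P R : Type} [Semiring R] (nO iO : R → R) {g l : ℕ}
    (I : HTI (GAtom P R)) (γ : Fin g → R) (lam : Fin l → R) : W → WT P R g l → R
  | _, .const k => k
  | _, .gvar x => γ x
  | _, .lvar y => lam y
  | w, .form φ => if BF.sat I γ lam w φ then 1 else 0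
  | w, .wimpl α β =>
      if ∀ w', W.le w w' →
        (WT.val nO iO I γ lam w' α = 0 ∨ WT.val nO iO I γ lam w' β ≠ 0)
        then 1 else 0
  | w, .add α β => WT.val nO iO I γ lam w α + WT.val nO iO I γ lam w β
  | w, .mul α β => WT.val nO iO I γ lam w α * WT.val nO iO I γ lam w β
  | w, .neg α => nO (WT.val nO iO I γ lam w α)
  | w, .inv α => iO (WT.val nO iO I γ lam w α)

/-- The comparison operators `∼ ∈ {>, ≥, =, ≤, <, ≯, ≱, ≠, ≰, ≮}`. -/
inductive CmpOp : Type | gt | ge | eq | le | lt | ngt | nge | ne | nle | nlt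

/-- Interpretation of a comparison w.r.t. a strict order `ltR` on the semiring:
    `interp ltR op k v` is "`k ∼ v`". -/
def CmpOp.interp {R : Type} (ltR : R → R → Prop) : CmpOp → R → R → Prop
  | .gt => fun k v => ltR v k
  | .ge => fun k v => ltR v k ∨ k = v
  | .eq => fun k v => k = v
  | .le => fun k v => ltR k v ∨ k = v
  | .lt => fun k v => ltR k v
  | .ngt => fun k v => ¬ ltR v k
  | .nge => fun k v => ¬ (ltR v k ∨ k = v)
  | .ne => fun k v => k ≠ v
  | .nle => fun k v => ¬ (ltR k v ∨ k = v)
  | .nlt => fun k v => ¬ ltR k v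

/-- An algebraic constraint `lhs ∼_R Σȳ α(x̄, ȳ)` with `l` local variables; `lhs`
    is a global variable or a semiring constant. -/
structure Constr (P R : Type) (g : ℕ) : Type where
  l : ℕ
  lhs : Fin g ⊕ R
  op : CmpOp
  wf : WT P R g l

/-- `⟦(α)^Σ⟧`: the `⊕`-sum over all assignments of the local variables ranging
    over `Dom` (the grounding domain; `Dom = Set.univ` for the full program). -/
noncomputable def Constr.sval {P R : Type} [Semiring R] (nO iO : R → R)
    (Dom : Set R) {g : ℕ} (c : Constr P R g) (γ : Fin g → R)
    (I : HTI (GAtom P R)) (w : W) : R :=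
  ∑ᶠ lam ∈ {lam : Fin c.l → R | ∀ j, lam j ∈ Dom},
    WT.val nO iO I γ lam w c.wf

/-- Satisfaction of an algebraic constraint at `I_w`:
    `lhs ∼ ⟦(α)^Σ⟧(I_{w'})` for all `w' ≥ w`. -/
def Constr.csat {P R : Type} [Semiring R] (nO iO : R → R) (ltR : R → R → Prop)
    (Dom : Set R) {g : ℕ} (c : Constr P R g) (γ : Fin g → R)
    (I : HTI (GAtom P R)) (w : W) : Prop :=
  ∀ w', W.le w w' →
    (c.op.interp ltR) (Sum.elim γ id c.lhs) (c.sval nO iO Dom γ I w')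

/-- A part of an `AC`-rule: a σ-atom or an algebraic constraint. -/
inductive RPart (P R : Type) (g : ℕ) : Type
  | atom (p : P) (args : List (Fin g ⊕ R))
  | constr (c : Constr P R g)

/-- Satisfaction of a rule part at `I_w` under the assignment `γ`. -/
def RPart.psat {P R : Type} [Semiring R] (nO iO : R → R) (ltR : R → R → Prop)
    (Dom : Set R) {g : ℕ} (γ : Fin g → R) (I : HTI (GAtom P R)) (w : W) :
    RPart P R g → Prop
  | .atom p args => (p, args.map (Sum.elim γ id)) ∈ I.at w
  | .constr c => c.csat nO iO ltR Dom γ I w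

/-- An `AC`-rule `φ ← ψ₁, …, ψₙ, ¬θ₁, …, ¬θ_m` with `g` global variables. -/
structure Rule (P R : Type) : Type where
  g : ℕ
  head : RPart P R g
  pos : List (RPart P R g)
  neg : List (RPart P R g)

/-- HT satisfaction of an `AC`-rule at `I_w`: global variables are universally
    quantified over `Dom`, and `(B_∧(r) → φ)^Σ` is evaluated as an HT implication
    (negated body parts `¬θ` being satisfied at `w'` iff `θ` fails at all
    `w'' ≥ w'`). -/
def Rule.rsat {P R : Type} [Semiring R] (nO iO : R → R) (ltR : R → R → Prop)
    (Dom : Set R) (I : HTI (GAtom P R)) (w : W) (r : Rule P R) : Prop :=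
  ∀ γ : Fin r.g → R, (∀ x, γ x ∈ Dom) →
    ∀ w', W.le w w' →
      ((∀ p ∈ r.pos, RPart.psat nO iO ltR Dom γ I w' p) ∧
        (∀ p ∈ r.neg, ∀ w'', W.le w' w'' →
          ¬ RPart.psat nO iO ltR Dom γ I w'' p)) →
      RPart.psat nO iO ltR Dom γ I w' r.head

/-- HT satisfaction of an `AC`-program. -/
def progSat {P R : Type} [Semiring R] (nO iO : R → R) (ltR : R → R → Prop)
    (Dom : Set R) (Pr : Set (Rule P R)) (I : HTI (GAtom P R)) (w : W) : Prop :=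
  ∀ r ∈ Pr, r.rsat nO iO ltR Dom I w

/-- `J` is an equilibrium model of the `AC`-program `Pr`. -/
def EqModel {P R : Type} [Semiring R] (nO iO : R → R) (ltR : R → R → Prop)
    (Dom : Set R) (Pr : Set (Rule P R)) (J : Set (GAtom P R)) : Prop :=
  progSat nO iO ltR Dom Pr ⟨J, J, le_refl J⟩ .H ∧
    ∀ J' (h : J' ⊆ J), J' ≠ J → ¬ progSat nO iO ltR Dom Pr ⟨J', J, h⟩ .H

/-- `Π₁` and `Π₂` are strongly equivalent: for every `AC`-program `Π'`, the
    equilibrium models of `Π₁ ∪ Π'` and `Π₂ ∪ Π'` coincide. -/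
def StrongEq {P R : Type} [Semiring R] (nO iO : R → R) (ltR : R → R → Prop)
    (P1 P2 : Set (Rule P R)) : Prop :=
  ∀ Pr : Set (Rule P R), ∀ J : Set (GAtom P R),
    EqModel nO iO ltR Set.univ (P1 ∪ Pr) J ↔ EqModel nO iO ltR Set.univ (P2 ∪ Pr) J

/-!
HT satisfaction is invariant under bisimulation; in particular `(I, T) ⊨ Π` iff
`(I.t, I.t, H) ⊨ Π`, so HT-models at `T` are determined by those at `H`.

Equilibrium models of `Π ∪ Π'` only depend on the HT-models of `Π` at `H`, which gives one
direction. For the other, extend `Π` by the facts `a ←` (`a ∈ I.h`) and the rules `a ← b`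
(`a, b ∈ I.t \ I.h`). Among the `J ⊊ I.t`, only `J = I.h` satisfies these rules, so `I.t` is an
equilibrium model of the extension iff `(I.t, I.t) ⊨ Π` and, unless `I.h = I.t`, `(I, H) ⊭ Π`.
Applied to `I` and to `(I.t, I.t)`, this reads `(I, H) ⊨ Π` off equilibrium models, which
strong equivalence preserves.
-/

namespace W

theorem le_refl (w : W) : W.le w w := by cases w <;> trivial

theorem forall_iff {p : W → Prop} : (∀ w, p w) ↔ p .H ∧ p .T :=
  ⟨fun h => ⟨h .H, h .T⟩, fun ⟨hH, hT⟩ w => by cases w <;> assumption⟩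

end W

structure HTI.Bisim {A : Type*} (I I' : HTI A) (Z : W → W → Prop) : Prop where
  at_eq : ∀ {w v}, Z w v → I.at w = I'.at v
  forth : ∀ {w v w'}, Z w v → W.le w w' → ∃ v', W.le v v' ∧ Z w' v'
  back : ∀ {w v v'}, Z w v → W.le v v' → ∃ w', W.le w w' ∧ Z w' v'

namespace HTI.Bisim

variable {A : Type*} {I I' : HTI A} {Z : W → W → Prop}

theorem forall_le_iff (hZ : I.Bisim I' Z) {p q : W → Prop}
    (hpq : ∀ {w v}, Z w v → (p w ↔ q v)) {w v : W} (hwv : Z w v) :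
    (∀ w', W.le w w' → p w') ↔ (∀ v', W.le v v' → q v') := by
  constructor
  · intro hp v' hvv'
    obtain ⟨w', hww', hZ'⟩ := hZ.back hwv hvv'
    exact (hpq hZ').1 (hp w' hww')
  · intro hq w' hww'
    obtain ⟨v', hvv', hZ'⟩ := hZ.forth hwv hww'
    exact (hpq hZ').2 (hq v' hvv')

end HTI.Bisim

section Bisimulation

variable {P R : Type} {I I' : HTI (GAtom P R)} {Z : W → W → Prop}

theorem BF.sat_iff_of_bisim (hZ : I.Bisim I' Z) {g l : ℕ} (γ : Fin g → R) (lam : Fin l → R)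
    (φ : BF P R g l) {w v : W} (hwv : Z w v) :
    BF.sat I γ lam w φ ↔ BF.sat I' γ lam v φ := by
  induction φ generalizing w v with
  | bot => rfl
  | atom p args => simp only [BF.sat, hZ.at_eq hwv]
  | impl φ ψ ihφ ihψ => exact hZ.forall_le_iff (fun h => imp_congr (ihφ h) (ihψ h)) hwv
  | or φ ψ ihφ ihψ => exact or_congr (ihφ hwv) (ihψ hwv)
  | and φ ψ ihφ ihψ => exact and_congr (ihφ hwv) (ihψ hwv)

variable [Semiring R] (nO iO : R → R)

open Classical in
theorem WT.val_eq_of_bisim (hZ : I.Bisim I' Z) {g l : ℕ} (γ : Fin g → R) (lam : Fin l → R)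
    (α : WT P R g l) {w v : W} (hwv : Z w v) :
    WT.val nO iO I γ lam w α = WT.val nO iO I' γ lam v α := by
  induction α generalizing w v with
  | const k => rfl
  | gvar x => rfl
  | lvar y => rfl
  | form φ => exact if_congr (BF.sat_iff_of_bisim hZ γ lam φ hwv) rfl rfl
  | wimpl α β ihα ihβ =>
    refine if_congr (hZ.forall_le_iff (fun h => ?_) hwv) rfl rfl
    rw [ihα h, ihβ h]
  | add α β ihα ihβ => simp only [WT.val, ihα hwv, ihβ hwv]
  | mul α β ihα ihβ => simp only [WT.val, ihα hwv, ihβ hwv]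
  | neg α ihα => simp only [WT.val, ihα hwv]
  | inv α ihα => simp only [WT.val, ihα hwv]

variable (ltR : R → R → Prop) (Dom : Set R)

theorem Constr.csat_iff_of_bisim (hZ : I.Bisim I' Z) {g : ℕ} (c : Constr P R g)
    (γ : Fin g → R) {w v : W} (hwv : Z w v) :
    c.csat nO iO ltR Dom γ I w ↔ c.csat nO iO ltR Dom γ I' v := by
  refine hZ.forall_le_iff (fun h => ?_) hwv
  have hsval : c.sval nO iO Dom γ I _ = c.sval nO iO Dom γ I' _ :=
    finsum_mem_congr rfl fun lam _ => WT.val_eq_of_bisim nO iO hZ γ lam c.wf h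
  rw [hsval]

theorem RPart.psat_iff_of_bisim (hZ : I.Bisim I' Z) {g : ℕ} (γ : Fin g → R)
    (p : RPart P R g) {w v : W} (hwv : Z w v) :
    p.psat nO iO ltR Dom γ I w ↔ p.psat nO iO ltR Dom γ I' v := by
  cases p with
  | atom q args => simp only [RPart.psat, hZ.at_eq hwv]
  | constr c => exact c.csat_iff_of_bisim nO iO ltR Dom hZ γ hwv

theorem Rule.rsat_iff_of_bisim (hZ : I.Bisim I' Z) (r : Rule P R) {w v : W} (hwv : Z w v) :
    r.rsat nO iO ltR Dom I w ↔ r.rsat nO iO ltR Dom I' v := by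
  have hpsat {γ : Fin r.g → R} (p : RPart P R r.g) {w v : W} (h : Z w v) :=
    RPart.psat_iff_of_bisim nO iO ltR Dom hZ γ p h
  refine forall₂_congr fun γ _ => hZ.forall_le_iff (fun h => ?_) hwv
  refine imp_congr (and_congr (forall₂_congr fun p _ => hpsat p h) ?_) (hpsat _ h)
  exact forall₂_congr fun p _ => hZ.forall_le_iff (fun h' => not_congr (hpsat p h')) h

theorem progSat_iff_of_bisim (hZ : I.Bisim I' Z) (Pr : Set (Rule P R)) {w v : W}
    (hwv : Z w v) : progSat nO iO ltR Dom Pr I w ↔ progSat nO iO ltR Dom Pr I' v :=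
  forall₂_congr fun r _ => r.rsat_iff_of_bisim nO iO ltR Dom hZ hwv

end Bisimulation

def HTI.total {A : Type*} (J : Set A) : HTI A := ⟨J, J, subset_rfl⟩

@[simp]
theorem HTI.total_h {A : Type*} (J : Set A) : (HTI.total J).h = J := rfl

@[simp]
theorem HTI.total_t {A : Type*} (J : Set A) : (HTI.total J).t = J := rfl

theorem HTI.total_at {A : Type*} (J : Set A) (w : W) : (HTI.total J).at w = J := by
  cases w <;> rfl

theorem HTI.eq_total_of_h_eq_t {A : Type*} {I : HTI A} (h : I.h = I.t) : I = HTI.total I.t := by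
  cases I
  cases h
  rfl

theorem HTI.bisim_total {A : Type*} (I : HTI A) : I.Bisim (HTI.total I.t) fun w _ => w = .T where
  at_eq := by rintro _ v rfl; exact (HTI.total_at I.t v).symm
  forth := by rintro _ v w' rfl (rfl : w' = .T); exact ⟨v, W.le_refl v, rfl⟩
  back := by rintro _ v v' rfl -; exact ⟨.T, rfl, rfl⟩

section Programs

variable {P R : Type} [Semiring R] (nO iO : R → R) (ltR : R → R → Prop) (Dom : Set R)

theorem progSat_T_iff_total (Pr : Set (Rule P R)) (I : HTI (GAtom P R)) :
    progSat nO iO ltR Dom Pr I .T ↔ progSat nO iO ltR Dom Pr (HTI.total I.t) .H :=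
  progSat_iff_of_bisim nO iO ltR Dom I.bisim_total Pr rfl

theorem progSat_T_of_H {Pr : Set (Rule P R)} {I : HTI (GAtom P R)}
    (h : progSat nO iO ltR Dom Pr I .H) : progSat nO iO ltR Dom Pr I .T :=
  fun r hr γ hγ w' _ => h r hr γ hγ w' trivial

theorem progSat_union (P1 P2 : Set (Rule P R)) (I : HTI (GAtom P R)) (w : W) :
    progSat nO iO ltR Dom (P1 ∪ P2) I w ↔
      progSat nO iO ltR Dom P1 I w ∧ progSat nO iO ltR Dom P2 I w := by
  simp only [progSat, Set.mem_union, or_imp, forall_and]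

theorem eqModel_congr {P1 P2 : Set (Rule P R)}
    (h : ∀ I, progSat nO iO ltR Dom P1 I .H ↔ progSat nO iO ltR Dom P2 I .H)
    (J : Set (GAtom P R)) : EqModel nO iO ltR Dom P1 J ↔ EqModel nO iO ltR Dom P2 J := by
  simp only [EqModel, h]

end Programs

section Completion

variable {P R : Type}

def RPart.ofAtom {g : ℕ} (a : GAtom P R) : RPart P R g := .atom a.1 (a.2.map Sum.inr)

def factRule (a : GAtom P R) : Rule P R := ⟨0, .ofAtom a, [], []⟩

def implRule (a b : GAtom P R) : Rule P R := ⟨0, .ofAtom a, [.ofAtom b], []⟩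

def completion (I : HTI (GAtom P R)) : Set (Rule P R) :=
  factRule '' I.h ∪ Set.image2 implRule (I.t \ I.h) (I.t \ I.h)

variable [Semiring R] (nO iO : R → R) (ltR : R → R → Prop) (Dom : Set R)

theorem RPart.psat_ofAtom {g : ℕ} (γ : Fin g → R) (a : GAtom P R) (I : HTI (GAtom P R))
    (w : W) : (RPart.ofAtom a).psat nO iO ltR Dom γ I w ↔ a ∈ I.at w := by
  simp [RPart.ofAtom, RPart.psat, List.map_map]

theorem rsat_factRule (a : GAtom P R) (I : HTI (GAtom P R)) :
    (factRule a).rsat nO iO ltR Dom I .H ↔ a ∈ I.h := by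
  dsimp only [Rule.rsat, factRule]
  simp only [IsEmpty.forall_iff, W.le, List.not_mem_nil, implies_true, W.forall_iff, and_self,
    RPart.psat_ofAtom, HTI.at, forall_const, and_iff_left_iff_imp]
  exact fun ha => I.sub ha

theorem rsat_implRule (a b : GAtom P R) (I : HTI (GAtom P R)) :
    (implRule a b).rsat nO iO ltR Dom I .H ↔ (b ∈ I.h → a ∈ I.h) ∧ (b ∈ I.t → a ∈ I.t) := by
  dsimp only [Rule.rsat, implRule]
  simp [RPart.psat_ofAtom, W.forall_iff, W.le, HTI.at]

theorem progSat_completion_iff (I : HTI (GAtom P R)) {J : Set (GAtom P R)} (hJ : J ⊆ I.t) :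
    progSat nO iO ltR Dom (completion I) ⟨J, I.t, hJ⟩ .H ↔ J = I.h ∨ J = I.t := by
  rw [completion, progSat_union]
  simp only [progSat, Set.forall_mem_image, Set.forall_mem_image2, rsat_factRule, rsat_implRule]
  constructor
  · rintro ⟨hhJ, himpl⟩
    by_cases hnew : ∃ b ∈ J, b ∉ I.h
    · obtain ⟨b, hbJ, hbh⟩ := hnew
      refine Or.inr (hJ.antisymm fun a hat => ?_)
      by_cases hah : a ∈ I.h
      · exact hhJ hah
      · exact (himpl a ⟨hat, hah⟩ b ⟨hJ hbJ, hbh⟩).1 hbJ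
    · simp only [not_exists, not_and, not_not] at hnew
      exact Or.inl (Set.Subset.antisymm hnew hhJ)
  · rintro (rfl | rfl)
    · exact ⟨fun _ ha => ha, fun _ ha _ hb => ⟨fun hbh => absurd hbh hb.2, fun _ => ha.1⟩⟩
    · exact ⟨fun _ ha => I.sub ha, fun _ ha _ _ => ⟨fun _ => ha.1, fun _ => ha.1⟩⟩

end Completion

section StrongEquivalence

variable {P R : Type} [Semiring R] (nO iO : R → R) (ltR : R → R → Prop) (Dom : Set R)

theorem progSat_total_of_H {Pr : Set (Rule P R)} {I : HTI (GAtom P R)}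
    (h : progSat nO iO ltR Dom Pr I .H) : progSat nO iO ltR Dom Pr (HTI.total I.t) .H :=
  (progSat_T_iff_total nO iO ltR Dom Pr I).1 (progSat_T_of_H nO iO ltR Dom h)

theorem eqModel_union_completion_iff (Pr : Set (Rule P R)) (I : HTI (GAtom P R)) :
    EqModel nO iO ltR Dom (Pr ∪ completion I) I.t ↔
      progSat nO iO ltR Dom Pr (HTI.total I.t) .H ∧
        (progSat nO iO ltR Dom Pr I .H → I.h = I.t) := by
  have hC {J} (hJ : J ⊆ I.t) := progSat_completion_iff nO iO ltR Dom I hJ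
  refine and_congr ?_ ⟨fun hmin hP => ?_, fun hP J hJ hne hsat => ?_⟩
  · exact (progSat_union ..).trans (and_iff_left ((hC subset_rfl).2 (Or.inr rfl)))
  · by_contra hne
    exact hmin I.h I.sub hne ((progSat_union ..).2 ⟨hP, (hC I.sub).2 (Or.inl rfl)⟩)
  · rw [progSat_union] at hsat
    obtain rfl | rfl := (hC hJ).1 hsat.2
    · exact hne (hP hsat.1)
    · exact hne rfl

theorem eqModel_union_completion_total_iff (Pr : Set (Rule P R)) (J : Set (GAtom P R)) :
    EqModel nO iO ltR Dom (Pr ∪ completion (HTI.total J)) J ↔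
      progSat nO iO ltR Dom Pr (HTI.total J) .H := by
  simpa using eqModel_union_completion_iff nO iO ltR Dom Pr (HTI.total J)

theorem progSat_H_iff_eqModel (Pr : Set (Rule P R)) (I : HTI (GAtom P R)) :
    progSat nO iO ltR Dom Pr I .H ↔
      EqModel nO iO ltR Dom (Pr ∪ completion (HTI.total I.t)) I.t ∧
        (EqModel nO iO ltR Dom (Pr ∪ completion I) I.t → I.h = I.t) := by
  rw [eqModel_union_completion_total_iff, eqModel_union_completion_iff]
  have hpersist := progSat_total_of_H nO iO ltR Dom (Pr := Pr) (I := I)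
  by_cases hht : I.h = I.t
  · have hI : progSat nO iO ltR Dom Pr I .H ↔ progSat nO iO ltR Dom Pr (HTI.total I.t) .H := by
      rw [← HTI.eq_total_of_h_eq_t hht]
    simpa only [hht, imp_true_iff, and_true] using hI
  · refine ⟨fun hP => ⟨hpersist hP, fun h => h.2 hP⟩, fun ⟨htot, hcond⟩ => ?_⟩
    by_contra hP
    exact hht (hcond ⟨htot, fun h => absurd h hP⟩)

end StrongEquivalence

/-- **Strong Equivalence Characterisation**: two `AC`-programs `Π₁` and `Π₂`
    (over a common semiring signature) are strongly equivalent iff they have the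
    same HT-models, i.e. the same satisfying pointed HT-interpretations. -/
theorem strong_equivalence_characterisation {P R : Type} [Semiring R]
    (nO iO : R → R) (ltR : R → R → Prop) (P1 P2 : Set (Rule P R)) :
    StrongEq nO iO ltR P1 P2 ↔
      ∀ (I : HTI (GAtom P R)) (w : W),
        progSat nO iO ltR Set.univ P1 I w ↔ progSat nO iO ltR Set.univ P2 I w := by
  constructor
  · intro hSE
    have hH (I : HTI (GAtom P R)) :
        progSat nO iO ltR Set.univ P1 I .H ↔ progSat nO iO ltR Set.univ P2 I .H := by
      rw [progSat_H_iff_eqModel, progSat_H_iff_eqModel, hSE, hSE]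
    rintro I (_ | _)
    · exact hH I
    · rw [progSat_T_iff_total, progSat_T_iff_total]
      exact hH _
  · intro hHT Pr
    refine eqModel_congr nO iO ltR Set.univ fun I => ?_
    rw [progSat_union, progSat_union, hHT I .H]
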